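/- For every index p ∈ {1,…,d}, E[ (uᵀAu · u_p²)² ] = 3·(tr(A))² + 6·Σ_{i=1}^d A_{i,i}² + 24·A_{p,p}·tr(A) + 72·A_{p,p}² + 3·Σ_{i>j} (A_{i,j} + A_{j,i})² + 12·Σ_{i : i>p} (A_{i,p} + A_{p,i})² + 12·Σ_{j : j<p} (A_{p,j} + A_{j,p})², where Σ_{i>j} ranges over all pairs (i,j) with 1 ≤ j < i ≤ d. -/

import Mathlib

/-!
Expanding the square, `(uᵀAu · u_p²)²` is `∑ A_ij A_kl u_i u_j u_k u_l u_p⁴`. Gaussian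
integration by parts, `E[u_p² X] = (c + 1) E[X]` for a monomial `X` in which `u_p` occurs `c` times, turns the
factor `u_p⁴` into the weight `(c + 1)(c + 3)`, and the remaining fourth moment
`E[u_i u_j u_k u_l] = δ_ij δ_kl + δ_ik δ_jl + δ_il δ_jk` contracts the index sum to a double sum.
-/

open MeasureTheory ProbabilityTheory Finset

noncomputable def stdGaussianVec (d : ℕ) : Measure (Fin d → ℝ) :=
  Measure.pi fun _ => gaussianReal 0 1

def quadForm {d : ℕ} (A : Matrix (Fin d) (Fin d) ℝ) (u : Fin d → ℝ) : ℝ :=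
  ∑ i, ∑ j, A i j * u i * u j

noncomputable def gaussianMoment (n : ℕ) : ℝ := ∫ x, x ^ n ∂gaussianReal 0 1

lemma integrable_pow_gaussianReal (μ : ℝ) (v : NNReal) (n : ℕ) :
    Integrable (fun x : ℝ => x ^ n) (gaussianReal μ v) :=
  (memLp_id_gaussianReal (n : NNReal)).integrable_norm_pow' |>.mono'
    (by fun_prop) (ae_of_all _ fun x => by simp [norm_pow])

lemma integrable_pow_mul_gaussianPDFReal (μ : ℝ) {v : NNReal} (hv : v ≠ 0) (n : ℕ) :
    Integrable fun x : ℝ => x ^ n * gaussianPDFReal μ v x := by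
  have h := (integrable_withDensity_iff_integrable_smul' (measurable_gaussianPDF μ v)
    (ae_of_all _ fun _ => gaussianPDF_lt_top)).mp
    (gaussianReal_of_var_ne_zero μ hv ▸ integrable_pow_gaussianReal μ v n)
  simpa [toReal_gaussianPDF, mul_comm] using h

open Real in
lemma hasDerivAt_gaussianPDFReal_zero_one (x : ℝ) :
    HasDerivAt (gaussianPDFReal 0 1) (-x * gaussianPDFReal 0 1 x) x := by
  have h : HasDerivAt (fun x : ℝ => -x ^ 2 / 2) (-x) x := by
    simpa using ((hasDerivAt_pow 2 x).neg.div_const 2).congr_deriv (by ring)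
  have hφ : gaussianPDFReal 0 1 = fun y => (√(2 * π))⁻¹ * rexp (-y ^ 2 / 2) := by
    ext y; simp [gaussianPDFReal]
  rw [hφ]
  exact (h.exp.const_mul _).congr_deriv (by ring)

lemma gaussianMoment_add_two (n : ℕ) :
    gaussianMoment (n + 2) = (n + 1) * gaussianMoment n := by
  simp only [gaussianMoment, integral_gaussianReal_eq_integral_smul one_ne_zero, smul_eq_mul]
  have hφ := integrable_pow_mul_gaussianPDFReal 0 one_ne_zero
  have hparts := integral_mul_deriv_eq_deriv_mul_of_integrable
    (u := fun x : ℝ => x ^ (n + 1)) (u' := fun x => (n + 1) * x ^ n)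
    (v := gaussianPDFReal 0 1) (v' := fun x => -x * gaussianPDFReal 0 1 x)
    (fun x _ => by simpa using hasDerivAt_pow (n + 1) x)
    (fun x _ => hasDerivAt_gaussianPDFReal_zero_one x)
    (by simpa [Pi.mul_def, pow_succ, mul_assoc] using (hφ (n + 2)).neg)
    (by simpa [Pi.mul_def, mul_assoc] using (hφ n).const_mul (n + 1 : ℝ))
    (hφ (n + 1))
  simp only [mul_assoc, integral_const_mul] at hparts
  calc ∫ x, gaussianPDFReal 0 1 x * x ^ (n + 2)
      = -∫ x, x ^ (n + 1) * (-x * gaussianPDFReal 0 1 x) := by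
        rw [← integral_neg]; congr 1 with x; ring
    _ = (n + 1) * ∫ x, gaussianPDFReal 0 1 x * x ^ n := by
        simp only [hparts, neg_neg, mul_comm (_ ^ n)]

lemma gaussianMoment_zero : gaussianMoment 0 = 1 := by simp [gaussianMoment]

lemma gaussianMoment_one : gaussianMoment 1 = 0 := by
  simp [gaussianMoment, integral_id_gaussianReal]

lemma gaussianMoment_two : gaussianMoment 2 = 1 := by
  simpa [gaussianMoment_zero] using gaussianMoment_add_two 0

lemma gaussianMoment_three : gaussianMoment 3 = 0 := by
  simpa [gaussianMoment_one] using gaussianMoment_add_two 1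

lemma gaussianMoment_four : gaussianMoment 4 = 3 := by
  rw [gaussianMoment_add_two 2, gaussianMoment_two]; norm_num

section GaussianPi

variable {ι : Type*} [Fintype ι] [DecidableEq ι]

lemma Multiset.prod_map_eq_prod_pow_count {M : Type*} [CommMonoid M] (s : Multiset ι)
    (f : ι → M) : (s.map f).prod = ∏ m, f m ^ s.count m := by
  rw [Finset.prod_multiset_map_count]
  exact prod_subset (subset_univ _) fun m _ hm => by
    rw [Multiset.count_eq_zero.mpr (by simpa using hm), pow_zero]

lemma integrable_prod_map_pi_gaussianReal (s : Multiset ι) :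
    Integrable (fun u : ι → ℝ => (s.map u).prod) (Measure.pi fun _ => gaussianReal 0 1) := by
  simp only [Multiset.prod_map_eq_prod_pow_count]
  exact Integrable.fintype_prod fun m => integrable_pow_gaussianReal 0 1 (s.count m)

lemma integrable_pow_mul_prod_map_pi_gaussianReal (s : Multiset ι) (p : ι) (n : ℕ) :
    Integrable (fun u : ι → ℝ => u p ^ n * (s.map u).prod)
      (Measure.pi fun _ => gaussianReal 0 1) := by
  simpa using integrable_prod_map_pi_gaussianReal (Multiset.replicate n p + s)

lemma integral_prod_map_pi_gaussianReal (s : Multiset ι) :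
    ∫ u, (s.map u).prod ∂(Measure.pi fun _ => gaussianReal 0 1)
      = ∏ m, gaussianMoment (s.count m) := by
  simp only [Multiset.prod_map_eq_prod_pow_count]
  exact integral_fintype_prod_eq_prod fun m (x : ℝ) => x ^ s.count m

lemma integral_prod_map_cons_cons_pi_gaussianReal (s : Multiset ι) (p : ι) :
    ∫ u, ((p ::ₘ p ::ₘ s).map u).prod ∂(Measure.pi fun _ => gaussianReal 0 1)
      = (s.count p + 1) * ∫ u, (s.map u).prod ∂(Measure.pi fun _ => gaussianReal 0 1) := by
  simp only [integral_prod_map_pi_gaussianReal, Fintype.prod_eq_mul_prod_compl p,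
    Multiset.count_cons_self, gaussianMoment_add_two]
  rw [prod_congr rfl fun m hm => by
    have hmp : m ≠ p := by simpa using hm
    rw [Multiset.count_cons_of_ne hmp, Multiset.count_cons_of_ne hmp]]
  ring

lemma integral_pow_four_mul_prod_map_pi_gaussianReal (s : Multiset ι) (p : ι) :
    ∫ u, u p ^ 4 * (s.map u).prod ∂(Measure.pi fun _ => gaussianReal 0 1)
      = (s.count p + 1) * (s.count p + 3)
        * ∫ u, (s.map u).prod ∂(Measure.pi fun _ => gaussianReal 0 1) := by
  have h (u : ι → ℝ) :
      u p ^ 4 * (s.map u).prod = ((p ::ₘ p ::ₘ p ::ₘ p ::ₘ s).map u).prod := by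
    simp only [Multiset.map_cons, Multiset.prod_cons]; ring
  simp only [h, integral_prod_map_cons_cons_pi_gaussianReal, Multiset.count_cons_self]
  push_cast; ring

lemma prod_gaussianMoment_count (s : Multiset ι) :
    ∏ m, gaussianMoment (s.count m) = ∏ m ∈ s.toFinset, gaussianMoment (s.count m) :=
  (prod_subset (subset_univ _) fun m _ hm => by
    rw [Multiset.count_eq_zero.mpr (by simpa using hm), gaussianMoment_zero]).symm

lemma integral_prod_map_four_pi_gaussianReal (i j k l : ι) :
    ∫ u, (({i, j, k, l} : Multiset ι).map u).prod ∂(Measure.pi fun _ => gaussianReal 0 1)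
      = (if i = j then 1 else 0) * (if k = l then 1 else 0)
        + (if i = k then 1 else 0) * (if j = l then 1 else 0)
        + (if i = l then 1 else 0) * (if j = k then 1 else 0) := by
  rw [integral_prod_map_pi_gaussianReal, prod_gaussianMoment_count]
  by_cases hij : i = j <;> by_cases hik : i = k <;> by_cases hil : i = l <;>
    by_cases hjk : j = k <;> by_cases hjl : j = l <;> by_cases hkl : k = l <;>
    simp_all [Multiset.count_cons, eq_comm, gaussianMoment_one, gaussianMoment_two,
      gaussianMoment_three, gaussianMoment_four]
  all_goals norm_num

end GaussianPi

section Contraction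

variable {ι : Type*} [Fintype ι] [DecidableEq ι]

lemma sum_mul_wick_pairings (A : ι → ι → ℝ) (F : Multiset ι → ℝ) :
    ∑ i, ∑ j, ∑ k, ∑ l, A i j * A k l * (F {i, j, k, l} *
      ((if i = j then 1 else 0) * (if k = l then 1 else 0)
        + (if i = k then 1 else 0) * (if j = l then 1 else 0)
        + (if i = l then 1 else 0) * (if j = k then 1 else 0)))
    = ∑ i, ∑ j, (A i i * A j j + A i j * A i j + A i j * A j i) * F {i, i, j, j} := by
  simp only [mul_add, sum_add_distrib, mul_ite, mul_one, mul_zero, sum_ite_irrel, sum_const_zero,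
    sum_ite_eq, mem_univ, if_true]
  have hijij (i j : ι) : ({i, j, i, j} : Multiset ι) = {i, i, j, j} := by
    simp only [Multiset.insert_eq_cons, Multiset.cons_swap j i]
  have hijji (i j : ι) : ({i, j, j, i} : Multiset ι) = {i, i, j, j} := by
    rw [Multiset.pair_comm j i, hijij]
  simp only [hijij, add_mul, sum_add_distrib]
  congr 1
  exact sum_congr rfl fun i _ => sum_congr rfl fun j _ => by rw [hijji]

lemma sum_sum_mul_count_weight (g : ι → ι → ℝ) (p : ι) :
    ∑ i, ∑ j, g i j * (((({i, i, j, j} : Multiset ι).count p : ℝ) + 1)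
        * ((({i, i, j, j} : Multiset ι).count p : ℝ) + 3))
      = 3 * ∑ i, ∑ j, g i j + 12 * ∑ j, g p j + 12 * ∑ i, g i p + 8 * g p p := by
  have hw (i j : ι) : ((({i, i, j, j} : Multiset ι).count p : ℝ) + 1)
        * ((({i, i, j, j} : Multiset ι).count p : ℝ) + 3)
      = 3 + 12 * (if i = p then 1 else 0) + 12 * (if j = p then 1 else 0)
        + 8 * ((if i = p then 1 else 0) * (if j = p then 1 else 0)) := by
    by_cases hi : i = p <;> by_cases hj : j = p <;> simp_all [Multiset.count_cons, eq_comm] <;>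
      norm_num
  simp only [hw, mul_add, sum_add_distrib, mul_ite, mul_one, mul_zero, sum_ite_eq', mem_univ,
    if_true, sum_ite_irrel, sum_const_zero]
  simp only [← sum_mul]
  ring

end Contraction

section LinearOrder

variable {ι : Type*} [Fintype ι] [LinearOrder ι]

lemma sum_filter_gt_add_sum_filter_lt (g : ι → ℝ) (p : ι) :
    ∑ i ∈ univ.filter (p < ·), g i + ∑ i ∈ univ.filter (· < p), g i = ∑ i, g i - g p := by
  have h (i : ι) : (if p < i then g i else 0) + (if i < p then g i else 0)
      + (if i = p then g i else 0) = g i := by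
    rcases lt_trichotomy i p with hi | rfl | hi
    · simp [hi, hi.not_gt, hi.ne]
    · simp
    · simp [hi, hi.not_gt, hi.ne']
  rw [sum_filter, sum_filter, eq_sub_iff_add_eq, ← sum_add_distrib]
  simpa [sum_add_distrib] using sum_congr (s₁ := univ) rfl fun i _ => h i

lemma sum_sum_eq_two_mul_sum_sum_lt_add_sum_diag (f : ι → ι → ℝ) (hf : ∀ i j, f i j = f j i) :
    ∑ i, ∑ j, f i j = 2 * ∑ i, ∑ j ∈ univ.filter (· < i), f i j + ∑ i, f i i := by
  have hswap : ∑ i, ∑ j ∈ univ.filter (i < ·), f i j = ∑ i, ∑ j ∈ univ.filter (· < i), f i j := by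
    simp only [sum_filter]
    rw [sum_comm]
    simp only [hf]
  have hsplit := sum_congr (s₁ := univ) rfl fun i _ => sum_filter_gt_add_sum_filter_lt (f i) i
  rw [sum_add_distrib, sum_sub_distrib, hswap] at hsplit
  linarith

lemma sum_sum_pairings_mul_count_weight [DecidableEq ι] (A : Matrix ι ι ℝ) (p : ι) :
    ∑ i, ∑ j, (A i i * A j j + A i j * A i j + A i j * A j i)
        * (((({i, i, j, j} : Multiset ι).count p : ℝ) + 1)
          * ((({i, i, j, j} : Multiset ι).count p : ℝ) + 3))
      = 3 * (∑ i, A i i) ^ 2 + 6 * (∑ i, (A i i) ^ 2)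
        + 24 * A p p * (∑ i, A i i) + 72 * (A p p) ^ 2
        + 3 * (∑ i, ∑ j ∈ univ.filter (fun j => j < i), (A i j + A j i) ^ 2)
        + 12 * (∑ i ∈ univ.filter (fun i => p < i), (A i p + A p i) ^ 2)
        + 12 * (∑ j ∈ univ.filter (fun j => j < p), (A p j + A j p) ^ 2) := by
  rw [sum_sum_mul_count_weight]
  have hoff :=
    sum_sum_eq_two_mul_sum_sum_lt_add_sum_diag (fun i j => (A i j + A j i) ^ 2) fun _ _ => by ring
  have hrow := sum_filter_gt_add_sum_filter_lt (fun i => (A i p + A p i) ^ 2) p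
  have hcol : ∑ j ∈ univ.filter (· < p), (A p j + A j p) ^ 2
      = ∑ j ∈ univ.filter (· < p), (A j p + A p j) ^ 2 :=
    sum_congr rfl fun _ _ => by ring
  have hsq : ∑ i, ∑ j, (A i j + A j i) ^ 2 = 2 * ∑ i, ∑ j, (A i j * A i j + A i j * A j i) := by
    have hswap : ∑ i, ∑ j, (A j i * A j i + A j i * A i j)
        = ∑ i, ∑ j, (A i j * A i j + A i j * A j i) := sum_comm
    rw [two_mul]
    nth_rw 2 [← hswap]
    simp only [← sum_add_distrib]
    exact sum_congr rfl fun _ _ => sum_congr rfl fun _ _ => by ring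
  have hsqp : ∑ i, (A i p + A p i) ^ 2
      = ∑ j, (A p j * A p j + A p j * A j p) + ∑ i, (A i p * A i p + A i p * A p i) := by
    rw [← sum_add_distrib]; exact sum_congr rfl fun _ _ => by ring
  have hpairs : ∑ i, ∑ j, (A i i * A j j + A i j * A i j + A i j * A j i)
      = (∑ i, A i i) ^ 2 + ∑ i, ∑ j, (A i j * A i j + A i j * A j i) := by
    simp only [sq, sum_mul_sum, ← sum_add_distrib, add_assoc]
  have hrowp : ∑ j, (A p p * A j j + A p j * A p j + A p j * A j p)
      = A p p * ∑ j, A j j + ∑ j, (A p j * A p j + A p j * A j p) := by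
    simp only [mul_sum, ← sum_add_distrib, add_assoc]
  have hcolp : ∑ i, (A i i * A p p + A i p * A i p + A i p * A p i)
      = A p p * ∑ i, A i i + ∑ i, (A i p * A i p + A i p * A p i) := by
    simp only [mul_sum, ← sum_add_distrib]
    exact sum_congr rfl fun _ _ => by ring
  have hdiag : ∑ i, (A i i + A i i) ^ 2 = 4 * ∑ i, A i i ^ 2 := by
    rw [mul_sum]; exact sum_congr rfl fun _ _ => by ring
  rw [hdiag] at hoff
  linarith

end LinearOrder

lemma integral_sum_sum_sum_sum {ι α : Type*} [Fintype ι] [MeasurableSpace α] {μ : Measure α}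
    (f : ι → ι → ι → ι → α → ℝ) (hf : ∀ i j k l, Integrable (f i j k l) μ) :
    ∫ a, ∑ i, ∑ j, ∑ k, ∑ l, f i j k l a ∂μ = ∑ i, ∑ j, ∑ k, ∑ l, ∫ a, f i j k l a ∂μ := by
  have h₃ (i j k : ι) : Integrable (fun a => ∑ l, f i j k l a) μ :=
    integrable_finsetSum _ fun l _ => hf i j k l
  have hijji (i j : ι) : Integrable (fun a => ∑ k, ∑ l, f i j k l a) μ :=
    integrable_finsetSum _ fun k _ => h₃ i j k
  have hijij (i : ι) : Integrable (fun a => ∑ j, ∑ k, ∑ l, f i j k l a) μ :=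
    integrable_finsetSum _ fun j _ => hijji i j
  rw [integral_finsetSum _ fun i _ => hijij i]
  refine sum_congr rfl fun i _ => ?_
  rw [integral_finsetSum _ fun j _ => hijji i j]
  refine sum_congr rfl fun j _ => ?_
  rw [integral_finsetSum _ fun k _ => h₃ i j k]
  exact sum_congr rfl fun k _ => integral_finsetSum _ fun l _ => hf i j k l

lemma quadForm_mul_sq_sq {d : ℕ} (A : Matrix (Fin d) (Fin d) ℝ) (u : Fin d → ℝ) (p : Fin d) :
    (quadForm A u * u p ^ 2) ^ 2
      = ∑ i, ∑ j, ∑ k, ∑ l,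
          A i j * A k l * (u p ^ 4 * (({i, j, k, l} : Multiset (Fin d)).map u).prod) := by
  simp only [quadForm, sq, sum_mul, mul_sum]
  exact sum_congr rfl fun i _ => sum_congr rfl fun j _ =>
    sum_congr rfl fun k _ => sum_congr rfl fun l _ => by
      simp only [Multiset.insert_eq_cons, Multiset.map_cons, Multiset.map_singleton,
        Multiset.prod_cons, Multiset.prod_singleton]
      ring

theorem second_moment_quadForm_up_sq_general {d : ℕ}
    (A : Matrix (Fin d) (Fin d) ℝ) (p : Fin d) :
    ∫ u, (quadForm A u * (u p) ^ 2) ^ 2 ∂(stdGaussianVec d)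
      = 3 * (∑ i, A i i) ^ 2 + 6 * (∑ i, (A i i) ^ 2)
        + 24 * A p p * (∑ i, A i i) + 72 * (A p p) ^ 2
        + 3 * (∑ i, ∑ j ∈ Finset.univ.filter (fun j => j < i), (A i j + A j i) ^ 2)
        + 12 * (∑ i ∈ Finset.univ.filter (fun i => p < i), (A i p + A p i) ^ 2)
        + 12 * (∑ j ∈ Finset.univ.filter (fun j => j < p), (A p j + A j p) ^ 2) := by
  set F : Multiset (Fin d) → ℝ := fun s => ((s.count p : ℝ) + 1) * ((s.count p : ℝ) + 3)
  have hterm (i j k l : Fin d) :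
      ∫ u, A i j * A k l * (u p ^ 4 * (({i, j, k, l} : Multiset (Fin d)).map u).prod)
          ∂(stdGaussianVec d)
        = A i j * A k l * (F {i, j, k, l} *
          ((if i = j then 1 else 0) * (if k = l then 1 else 0)
            + (if i = k then 1 else 0) * (if j = l then 1 else 0)
            + (if i = l then 1 else 0) * (if j = k then 1 else 0))) := by
    rw [integral_const_mul, stdGaussianVec, integral_pow_four_mul_prod_map_pi_gaussianReal,
      integral_prod_map_four_pi_gaussianReal]
  calc ∫ u, (quadForm A u * u p ^ 2) ^ 2 ∂(stdGaussianVec d)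
      = ∑ i, ∑ j, ∑ k, ∑ l, ∫ u, A i j * A k l
          * (u p ^ 4 * (({i, j, k, l} : Multiset (Fin d)).map u).prod) ∂(stdGaussianVec d) := by
        simp only [quadForm_mul_sq_sq]
        exact integral_sum_sum_sum_sum _ fun i j k l =>
          (integrable_pow_mul_prod_map_pi_gaussianReal _ p 4).const_mul _
    _ = ∑ i, ∑ j, (A i i * A j j + A i j * A i j + A i j * A j i) * F {i, i, j, j} := by
        simp only [hterm]
        exact sum_mul_wick_pairings A F
    _ = _ := sum_sum_pairings_mul_count_weight A p

theorem second_moment_quadForm_up_sq {d : ℕ} (hd : 1 ≤ d)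
    (A : Matrix (Fin d) (Fin d) ℝ) (p : Fin d) :
    ∫ u, (quadForm A u * (u p) ^ 2) ^ 2 ∂(stdGaussianVec d)
      = 3 * (∑ i, A i i) ^ 2 + 6 * (∑ i, (A i i) ^ 2)
        + 24 * A p p * (∑ i, A i i) + 72 * (A p p) ^ 2
        + 3 * (∑ i, ∑ j ∈ Finset.univ.filter (fun j => j < i), (A i j + A j i) ^ 2)
        + 12 * (∑ i ∈ Finset.univ.filter (fun i => p < i), (A i p + A p i) ^ 2)
        + 12 * (∑ j ∈ Finset.univ.filter (fun j => j < p), (A p j + A j p) ^ 2) :=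
  second_moment_quadForm_up_sq_general A p
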